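/- Let Z ∼ N(0,1) and let soft(x,r) = sign(x)·max(|x|−r,0). Then for all a ∈ ℝ and r > 0, E[Z · soft(Z + a, r)] = Φ(a − r) + Φ(−a − r), where Φ is the standard normal CDF. -/

import Mathlib

/-!
Write `soft x r = (x - r)⁺ - (-x - r)⁺`. Since the standard Gaussian density satisfies
`φ' = -z φ`, integrating `(-(z + b) φ z)' = z (z + b) φ z - φ z` over `(-b, ∞)` gives
`E[Z (Z + b)⁺] = P(Z > -b) = Φ(b)`. The symmetry `Z ↦ -Z` turns the negative part into a
term of the same shape, with `b = -a - r` instead of `b = a - r`.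
-/

open MeasureTheory ProbabilityTheory

/-- The soft-thresholding function `soft(x,r) = sign(x) · max(|x|−r, 0)`. -/
noncomputable def soft (x r : ℝ) : ℝ := Real.sign x * max (|x| - r) 0

open Real Set Filter Topology

lemma soft_eq_max_sub_max {r : ℝ} (hr : 0 ≤ r) (x : ℝ) :
    soft x r = max (x - r) 0 - max (-x - r) 0 := by
  rcases lt_trichotomy x 0 with hx | rfl | hx
  · simp [soft, sign_of_neg hx, abs_of_neg hx, max_eq_right (by linarith : x - r ≤ 0)]
  · simp [soft, max_eq_right (by linarith : -r ≤ 0)]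
  · simp [soft, sign_of_pos hx, abs_of_pos hx, max_eq_right (by linarith : -x - r ≤ 0)]

namespace ProbabilityTheory

lemma gaussianPDFReal_zero_one_apply (x : ℝ) :
    gaussianPDFReal 0 1 x = (√(2 * π))⁻¹ * rexp (-2⁻¹ * x ^ 2) := by
  simp only [gaussianPDFReal, NNReal.coe_one, mul_one, sub_zero]
  ring_nf

lemma gaussianPDFReal_zero_neg (v : NNReal) (x : ℝ) :
    gaussianPDFReal 0 v (-x) = gaussianPDFReal 0 v x := by
  simp [gaussianPDFReal]

lemma hasDerivAt_gaussianPDFReal_zero_one (x : ℝ) :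
    HasDerivAt (gaussianPDFReal 0 1) (-x * gaussianPDFReal 0 1 x) x := by
  have h := (((hasDerivAt_pow 2 x).const_mul (-2⁻¹ : ℝ)).exp).const_mul (√(2 * π))⁻¹
  rw [funext gaussianPDFReal_zero_one_apply]
  exact h.congr_deriv (by push_cast; ring)

lemma integrable_pow_mul_gaussianPDFReal_zero_one (n : ℕ) :
    Integrable fun x ↦ x ^ n * gaussianPDFReal 0 1 x := by
  have h := (integrable_rpow_mul_exp_neg_mul_sq (b := 2⁻¹) (by norm_num) (s := n)
    (by linarith [n.cast_nonneg (α := ℝ)])).const_mul (√(2 * π))⁻¹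
  refine h.congr (ae_of_all _ fun x ↦ ?_)
  simp only [rpow_natCast, gaussianPDFReal_zero_one_apply]
  ring

lemma integrable_add_mul_gaussianPDFReal_zero_one (b : ℝ) :
    Integrable fun z ↦ (z + b) * gaussianPDFReal 0 1 z := by
  refine ((integrable_pow_mul_gaussianPDFReal_zero_one 1).add
    ((integrable_pow_mul_gaussianPDFReal_zero_one 0).const_mul b)).congr (ae_of_all _ fun z ↦ ?_)
  simp only [Pi.add_apply]
  ring

lemma integrable_mul_add_mul_gaussianPDFReal_zero_one (b : ℝ) :
    Integrable fun z ↦ z * (z + b) * gaussianPDFReal 0 1 z := by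
  refine ((integrable_pow_mul_gaussianPDFReal_zero_one 2).add
    ((integrable_pow_mul_gaussianPDFReal_zero_one 1).const_mul b)).congr (ae_of_all _ fun z ↦ ?_)
  simp only [Pi.add_apply]
  ring

lemma setIntegral_Ioi_mul_add_mul_gaussianPDFReal_zero_one (b : ℝ) :
    ∫ z in Ioi (-b), z * (z + b) * gaussianPDFReal 0 1 z =
      ∫ z in Ioi (-b), gaussianPDFReal 0 1 z := by
  set φ := gaussianPDFReal 0 1
  have hderiv (z : ℝ) : HasDerivAt (fun z ↦ -((z + b) * φ z)) (z * (z + b) * φ z - φ z) z :=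
    (((hasDerivAt_id z).add_const b).mul (hasDerivAt_gaussianPDFReal_zero_one z)).neg.congr_deriv
      (by simp only [id]; ring)
  have hφ : Integrable φ := integrable_gaussianPDFReal 0 1
  have hint := (integrable_mul_add_mul_gaussianPDFReal_zero_one b).sub hφ
  have hlim : Tendsto (fun z ↦ -((z + b) * φ z)) atTop (𝓝 0) :=
    tendsto_zero_of_hasDerivAt_of_integrableOn_Ioi (a := 0) (fun z _ ↦ hderiv z)
      hint.integrableOn (integrable_add_mul_gaussianPDFReal_zero_one b).neg.integrableOn
  have hftc := integral_Ioi_of_hasDerivAt_of_tendsto' (a := -b) (fun z _ ↦ hderiv z)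
    hint.integrableOn hlim
  rw [integral_sub (integrable_mul_add_mul_gaussianPDFReal_zero_one b).integrableOn
    hφ.integrableOn] at hftc
  simp only [neg_add_cancel, zero_mul, neg_zero, sub_zero] at hftc
  exact sub_eq_zero.1 hftc

lemma measurePreserving_neg_gaussianReal (v : NNReal) :
    MeasurePreserving (MeasurableEquiv.neg ℝ) (gaussianReal 0 v) (gaussianReal 0 v) :=
  ⟨measurable_neg, by simpa using gaussianReal_map_neg (μ := 0) (v := v)⟩

lemma toReal_gaussianReal_apply (μ : ℝ) {v : NNReal} (hv : v ≠ 0) (s : Set ℝ) :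
    (gaussianReal μ v s).toReal = ∫ x in s, gaussianPDFReal μ v x := by
  rw [gaussianReal_apply_eq_integral μ hv, ENNReal.toReal_ofReal
    (setIntegral_nonneg_of_ae (ae_of_all _ (gaussianPDFReal_nonneg μ v)))]

lemma integrable_mul_max_gaussianReal (μ : ℝ) (v : NNReal) (b : ℝ) :
    Integrable (fun z ↦ z * max (z + b) 0) (gaussianReal μ v) := by
  have hid : MemLp id 2 (gaussianReal μ v) := memLp_id_gaussianReal' 2 ENNReal.ofNat_ne_top
  exact hid.integrable_mul (hid.add (memLp_const b)).pos_part

lemma integral_mul_max_gaussianReal_zero_one (b : ℝ) :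
    ∫ z, z * max (z + b) 0 ∂gaussianReal 0 1 = (gaussianReal 0 1 (Iic b)).toReal := by
  have hvanish (z : ℝ) (hz : z ∉ Ioi (-b)) :
      gaussianPDFReal 0 1 z • (z * max (z + b) 0) = 0 := by
    rw [max_eq_right (by simp only [mem_Ioi, not_lt] at hz; linarith), mul_zero, smul_zero]
  calc ∫ z, z * max (z + b) 0 ∂gaussianReal 0 1
      = ∫ z in Ioi (-b), gaussianPDFReal 0 1 z • (z * max (z + b) 0) := by
        rw [integral_gaussianReal_eq_integral_smul one_ne_zero,
          setIntegral_eq_integral_of_forall_compl_eq_zero hvanish]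
    _ = ∫ z in Ioi (-b), z * (z + b) * gaussianPDFReal 0 1 z := by
        refine setIntegral_congr_fun measurableSet_Ioi fun z hz ↦ ?_
        rw [max_eq_left (by rw [mem_Ioi] at hz; linarith), smul_eq_mul, mul_comm]
    _ = ∫ z in Ioi (-b), gaussianPDFReal 0 1 (-z) := by
        simp only [setIntegral_Ioi_mul_add_mul_gaussianPDFReal_zero_one,
          gaussianPDFReal_zero_neg]
    _ = (gaussianReal 0 1 (Iic b)).toReal := by
        rw [integral_comp_neg_Ioi, neg_neg, toReal_gaussianReal_apply 0 one_ne_zero]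

end ProbabilityTheory

/-- Stein-type identity: for `Z ∼ N(0,1)`,
`E[Z · soft(Z + a, r)] = Φ(a − r) + Φ(−a − r)` where `Φ` is the standard normal CDF. -/
theorem stein_soft (a r : ℝ) (hr : 0 < r) :
    ∫ z, z * soft (z + a) r ∂(gaussianReal 0 1) =
      (gaussianReal 0 1 (Set.Iic (a - r))).toReal +
      (gaussianReal 0 1 (Set.Iic (-a - r))).toReal := by
  set f : ℝ → ℝ := fun z ↦ z * max (z + (-a - r)) 0
  have hsplit (z : ℝ) : z * soft (z + a) r = z * max (z + (a - r)) 0 + f (-z) := by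
    simp only [f, soft_eq_max_sub_max hr.le]
    ring_nf
  have hneg := measurePreserving_neg_gaussianReal 1
  have hf_neg : Integrable (fun z ↦ f (-z)) (gaussianReal 0 1) :=
    (hneg.integrable_comp_emb (MeasurableEquiv.neg ℝ).measurableEmbedding).2
      (integrable_mul_max_gaussianReal 0 1 _)
  have hf_neg_integral : ∫ z, f (-z) ∂gaussianReal 0 1 = ∫ z, f z ∂gaussianReal 0 1 :=
    hneg.integral_comp' f
  simp_rw [hsplit]
  rw [integral_add (integrable_mul_max_gaussianReal 0 1 _) hf_neg, hf_neg_integral,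
    integral_mul_max_gaussianReal_zero_one, integral_mul_max_gaussianReal_zero_one]
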